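/- In the setting L(a) = min(c₁/a + k₁, c₂/a + k₂) + γa with c₁ > c₂ ≥ 0, k₂ > k₁ ≥ 0, γ > 0, if the switching point a₀ = (c₁ − c₂)/(k₂ − k₁) satisfies sqrt(c₂/γ) < a₀ < sqrt(c₁/γ) is false — i.e., either a₀ ≤ sqrt(c₂/γ) or a₀ ≥ sqrt(c₁/γ) — then the minimizer of L over (0, ∞) is attained at an interior point of one of the two branches (namely sqrt(c₁/γ) or sqrt(c₂/γ)) and not at a₀. -/

import Mathlib

/-!
Each branch `c / a + k + γ * a` is strictly decreasing on `(0, √(c / γ)]` and strictly increasing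
on `[√(c / γ), ∞)`. The cost follows branch 2 left of the switching point `a₀` and branch 1 right
of it, and the two agree at `a₀`. If `a₀ ≤ √(c₂ / γ)`, branch 2 is still decreasing left of `a₀`,
so nothing there beats `a₀`, and the minimum is that of branch 1, at `√(c₁ / γ) > a₀`, strictly
below `L a₀`. Symmetrically if `√(c₁ / γ) ≤ a₀`, where branch 2 increases strictly just left of `a₀`.
-/

open Set

theorem div_add_mul_sub_div_add_mul (c γ : ℝ) {x y : ℝ} (hx : x ≠ 0) (hy : y ≠ 0) :
    c / x + γ * x - (c / y + γ * y) = (x - y) * (γ * x * y - c) / (x * y) := by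
  field_simp
  ring

theorem strictMonoOn_div_add_mul {c γ : ℝ} (hγ : 0 < γ) :
    StrictMonoOn (fun a => c / a + γ * a) (Ici √(c / γ) ∩ Ioi 0) := by
  rintro x ⟨hsx, hx⟩ y ⟨-, hy⟩ hxy
  have hc : c ≤ γ * √(c / γ) ^ 2 := by
    rw [Real.sq_sqrt', mul_max_of_nonneg _ _ hγ.le, mul_div_cancel₀ _ hγ.ne']
    exact le_max_left _ _
  have hxy_sq : √(c / γ) ^ 2 < y * x := by
    nlinarith [mul_self_le_mul_self (Real.sqrt_nonneg (c / γ)) hsx, mul_lt_mul_of_pos_left hxy hx]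
  have hpos : 0 < (y - x) * (γ * y * x - c) / (y * x) := by
    have : 0 < γ * y * x - c := by nlinarith [mul_lt_mul_of_pos_left hxy_sq hγ]
    exact div_pos (mul_pos (sub_pos.2 hxy) this) (mul_pos hy hx)
  have := div_add_mul_sub_div_add_mul c γ hy.ne' hx.ne'
  show c / x + γ * x < c / y + γ * y
  linarith

theorem strictAntiOn_div_add_mul {c γ : ℝ} (hγ : 0 < γ) :
    StrictAntiOn (fun a => c / a + γ * a) (Ioc 0 √(c / γ)) := by
  rintro x ⟨hx, -⟩ y ⟨hy, hys⟩ hxy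
  have hc : γ * √(c / γ) ^ 2 = c := by
    rw [Real.sq_sqrt (Real.sqrt_pos.mp (hy.trans_le hys)).le]
    field_simp
  have hyx_sq : y * x < √(c / γ) ^ 2 := by
    nlinarith [mul_lt_mul_of_pos_left hxy hx]
  have hneg : (y - x) * (γ * y * x - c) / (y * x) < 0 := by
    have : γ * y * x - c < 0 := by nlinarith [mul_lt_mul_of_pos_left hyx_sq hγ]
    exact div_neg_of_neg_of_pos (mul_neg_of_pos_of_neg (sub_pos.2 hxy) this) (mul_pos hy hx)
  have := div_add_mul_sub_div_add_mul c γ hy.ne' hx.ne'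
  show c / y + γ * y < c / x + γ * x
  linarith

theorem isMinOn_div_add_mul_sqrt {c γ : ℝ} (hγ : 0 < γ) (hc : 0 ≤ c) :
    IsMinOn (fun a => c / a + γ * a) (Ioi 0) √(c / γ) := by
  refine isMinOn_iff.2 fun b (hb : 0 < b) => ?_
  rcases hc.eq_or_lt with rfl | hc
  · simpa using mul_nonneg hγ.le hb.le
  have hs : 0 < √(c / γ) := Real.sqrt_pos.mpr (div_pos hc hγ)
  rcases le_total b √(c / γ) with hbs | hsb
  · exact (strictAntiOn_div_add_mul hγ).antitoneOn ⟨hb, hbs⟩ ⟨hs, le_rfl⟩ hbs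
  · exact (strictMonoOn_div_add_mul hγ).monotoneOn ⟨self_mem_Ici, hs⟩ ⟨hsb, hb⟩ hsb

noncomputable def twoStrategyCost (c₁ k₁ c₂ k₂ γ a : ℝ) : ℝ :=
  min (c₁ / a + k₁) (c₂ / a + k₂) + γ * a

noncomputable def switchPoint (c₁ k₁ c₂ k₂ : ℝ) : ℝ :=
  (c₁ - c₂) / (k₂ - k₁)

section TwoStrategy

variable {c₁ k₁ c₂ k₂ γ : ℝ}

theorem switchPoint_pos (hc : c₂ < c₁) (hk : k₁ < k₂) : 0 < switchPoint c₁ k₁ c₂ k₂ :=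
  div_pos (sub_pos.2 hc) (sub_pos.2 hk)

theorem twoStrategyCost_le_right (a : ℝ) :
    twoStrategyCost c₁ k₁ c₂ k₂ γ a ≤ c₂ / a + γ * a + k₂ := by
  unfold twoStrategyCost
  linarith [min_le_right (c₁ / a + k₁) (c₂ / a + k₂)]

theorem twoStrategyCost_eq_left (hk : k₁ < k₂) {b : ℝ} (hb : 0 < b)
    (h : switchPoint c₁ k₁ c₂ k₂ ≤ b) :
    twoStrategyCost c₁ k₁ c₂ k₂ γ b = c₁ / b + γ * b + k₁ := by
  rw [switchPoint, div_le_iff₀ (sub_pos.2 hk)] at h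
  have : (c₁ - c₂) / b ≤ k₂ - k₁ := by rw [div_le_iff₀ hb]; linarith
  rw [twoStrategyCost, min_eq_left (by rw [sub_div] at this; linarith)]
  ring

theorem twoStrategyCost_eq_right (hk : k₁ < k₂) {b : ℝ} (hb : 0 < b)
    (h : b ≤ switchPoint c₁ k₁ c₂ k₂) :
    twoStrategyCost c₁ k₁ c₂ k₂ γ b = c₂ / b + γ * b + k₂ := by
  rw [switchPoint, le_div_iff₀ (sub_pos.2 hk)] at h
  have : k₂ - k₁ ≤ (c₁ - c₂) / b := by rw [le_div_iff₀ hb]; linarith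
  rw [twoStrategyCost, min_eq_right (by rw [sub_div] at this; linarith)]
  ring

theorem isMinOn_twoStrategyCost_of_switchPoint_le (hγ : 0 < γ) (hc : c₂ < c₁) (hk : k₁ < k₂)
    (h : switchPoint c₁ k₁ c₂ k₂ ≤ √(c₂ / γ)) :
    IsMinOn (twoStrategyCost c₁ k₁ c₂ k₂ γ) (Ioi 0) √(c₁ / γ) := by
  set a₀ := switchPoint c₁ k₁ c₂ k₂
  have ha₀ : 0 < a₀ := switchPoint_pos hc hk
  have ha₀s₁ : a₀ ≤ √(c₁ / γ) :=
    h.trans (Real.sqrt_le_sqrt (div_le_div_of_nonneg_right hc.le hγ.le))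
  have hc₁ : 0 < c₁ := (div_pos_iff_of_pos_right hγ).mp (Real.sqrt_pos.mp (ha₀.trans_le ha₀s₁))
  refine isMinOn_iff.2 fun b (hb : 0 < b) => ?_
  rw [twoStrategyCost_eq_left hk (ha₀.trans_le ha₀s₁) ha₀s₁]
  rcases le_or_gt a₀ b with hab | hba
  · rw [twoStrategyCost_eq_left hk hb hab]
    linarith [isMinOn_iff.1 (isMinOn_div_add_mul_sqrt hγ hc₁.le) b hb]
  · calc c₁ / √(c₁ / γ) + γ * √(c₁ / γ) + k₁ ≤ c₁ / a₀ + γ * a₀ + k₁ := by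
          linarith [isMinOn_iff.1 (isMinOn_div_add_mul_sqrt hγ hc₁.le) a₀ ha₀]
      _ = c₂ / a₀ + γ * a₀ + k₂ := by
          rw [← twoStrategyCost_eq_left hk ha₀ le_rfl, twoStrategyCost_eq_right hk ha₀ le_rfl]
      _ ≤ c₂ / b + γ * b + k₂ := by
          linarith [(strictAntiOn_div_add_mul hγ).antitoneOn ⟨hb, hba.le.trans h⟩ ⟨ha₀, h⟩ hba.le]
      _ = twoStrategyCost c₁ k₁ c₂ k₂ γ b := (twoStrategyCost_eq_right hk hb hba.le).symm

theorem not_isMinOn_twoStrategyCost_of_switchPoint_le (hγ : 0 < γ) (hc₂ : 0 ≤ c₂) (hc : c₂ < c₁)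
    (hk : k₁ < k₂) (h : switchPoint c₁ k₁ c₂ k₂ ≤ √(c₂ / γ)) :
    ¬ IsMinOn (twoStrategyCost c₁ k₁ c₂ k₂ γ) (Ioi 0) (switchPoint c₁ k₁ c₂ k₂) := by
  set a₀ := switchPoint c₁ k₁ c₂ k₂
  have ha₀ : 0 < a₀ := switchPoint_pos hc hk
  have ha₀s₁ : a₀ < √(c₁ / γ) :=
    h.trans_lt (Real.sqrt_lt_sqrt (div_nonneg hc₂ hγ.le) (div_lt_div_of_pos_right hc hγ))
  intro hmin
  have hs₁ : 0 < √(c₁ / γ) := ha₀.trans ha₀s₁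
  have := isMinOn_iff.1 hmin _ hs₁
  rw [twoStrategyCost_eq_left hk ha₀ le_rfl, twoStrategyCost_eq_left hk hs₁ ha₀s₁.le] at this
  linarith [(strictAntiOn_div_add_mul hγ) ⟨ha₀, ha₀s₁.le⟩ ⟨hs₁, le_rfl⟩ ha₀s₁]

theorem isMinOn_twoStrategyCost_of_le_switchPoint (hγ : 0 < γ) (hc₂ : 0 ≤ c₂) (hc : c₂ < c₁)
    (hk : k₁ < k₂) (h : √(c₁ / γ) ≤ switchPoint c₁ k₁ c₂ k₂) :
    IsMinOn (twoStrategyCost c₁ k₁ c₂ k₂ γ) (Ioi 0) √(c₂ / γ) := by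
  set a₀ := switchPoint c₁ k₁ c₂ k₂
  have ha₀ : 0 < a₀ := switchPoint_pos hc hk
  have hmin₂ := isMinOn_div_add_mul_sqrt hγ hc₂
  refine isMinOn_iff.2 fun b (hb : 0 < b) => ?_
  -- if `c₂ = 0` the minimiser is `0`, where the cost is a junk value bounded only by branch 2
  refine (twoStrategyCost_le_right _).trans ?_
  rcases le_or_gt b a₀ with hba | hab
  · rw [twoStrategyCost_eq_right hk hb hba]
    linarith [isMinOn_iff.1 hmin₂ b hb]
  · calc c₂ / √(c₂ / γ) + γ * √(c₂ / γ) + k₂ ≤ c₂ / a₀ + γ * a₀ + k₂ := by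
          linarith [isMinOn_iff.1 hmin₂ a₀ ha₀]
      _ = c₁ / a₀ + γ * a₀ + k₁ := by
          rw [← twoStrategyCost_eq_right hk ha₀ le_rfl, twoStrategyCost_eq_left hk ha₀ le_rfl]
      _ ≤ c₁ / b + γ * b + k₁ := by
          linarith [(strictMonoOn_div_add_mul hγ).monotoneOn ⟨h, ha₀⟩ ⟨h.trans hab.le, hb⟩ hab.le]
      _ = twoStrategyCost c₁ k₁ c₂ k₂ γ b := (twoStrategyCost_eq_left hk hb hab.le).symm

theorem not_isMinOn_twoStrategyCost_of_le_switchPoint (hγ : 0 < γ) (hc₂ : 0 ≤ c₂)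
    (hc : c₂ < c₁) (hk : k₁ < k₂) (h : √(c₁ / γ) ≤ switchPoint c₁ k₁ c₂ k₂) :
    ¬ IsMinOn (twoStrategyCost c₁ k₁ c₂ k₂ γ) (Ioi 0) (switchPoint c₁ k₁ c₂ k₂) := by
  set a₀ := switchPoint c₁ k₁ c₂ k₂
  have ha₀ : 0 < a₀ := switchPoint_pos hc hk
  have hs₂a₀ : √(c₂ / γ) < a₀ :=
    (Real.sqrt_lt_sqrt (div_nonneg hc₂ hγ.le) (div_lt_div_of_pos_right hc hγ)).trans_le h
  obtain ⟨b, hs₂b, hba₀⟩ := exists_between hs₂a₀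
  have hb : 0 < b := (Real.sqrt_nonneg _).trans_lt hs₂b
  intro hmin
  have := isMinOn_iff.1 hmin b hb
  rw [twoStrategyCost_eq_right hk ha₀ le_rfl] at this
  have hlt : c₂ / b + γ * b < c₂ / a₀ + γ * a₀ :=
    strictMonoOn_div_add_mul hγ ⟨hs₂b.le, hb⟩ ⟨hs₂a₀.le, ha₀⟩ hba₀
  linarith [this.trans (twoStrategyCost_le_right b)]

end TwoStrategy

theorem stmt_17_general (c₁ c₂ k₁ k₂ γ : ℝ) (hc2 : 0 ≤ c₂) (hc : c₂ < c₁)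
    (hk : k₁ < k₂) (hγ : 0 < γ)
    (L : ℝ → ℝ) (hL : ∀ a, L a = min (c₁ / a + k₁) (c₂ / a + k₂) + γ * a)
    (a₀ : ℝ) (ha₀ : a₀ = (c₁ - c₂) / (k₂ - k₁))
    (hfail : a₀ ≤ Real.sqrt (c₂ / γ) ∨ Real.sqrt (c₁ / γ) ≤ a₀) :
    ((∀ b, 0 < b → L (Real.sqrt (c₁ / γ)) ≤ L b) ∨
        (∀ b, 0 < b → L (Real.sqrt (c₂ / γ)) ≤ L b)) ∧
      ¬ (∀ b, 0 < b → L a₀ ≤ L b) := by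
  obtain rfl : L = twoStrategyCost c₁ k₁ c₂ k₂ γ := funext hL
  obtain rfl : a₀ = switchPoint c₁ k₁ c₂ k₂ := ha₀
  simp only [← mem_Ioi, ← isMinOn_iff]
  rcases hfail with h | h
  · exact ⟨.inl (isMinOn_twoStrategyCost_of_switchPoint_le hγ hc hk h),
      not_isMinOn_twoStrategyCost_of_switchPoint_le hγ hc2 hc hk h⟩
  · exact ⟨.inr (isMinOn_twoStrategyCost_of_le_switchPoint hγ hc2 hc hk h),
      not_isMinOn_twoStrategyCost_of_le_switchPoint hγ hc2 hc hk h⟩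

theorem stmt_17 (c₁ c₂ k₁ k₂ γ : ℝ) (hc2 : 0 ≤ c₂) (hc : c₂ < c₁)
    (hk1 : 0 ≤ k₁) (hk : k₁ < k₂) (hγ : 0 < γ)
    (L : ℝ → ℝ) (hL : ∀ a, L a = min (c₁ / a + k₁) (c₂ / a + k₂) + γ * a)
    (a₀ : ℝ) (ha₀ : a₀ = (c₁ - c₂) / (k₂ - k₁))
    (hfail : a₀ ≤ Real.sqrt (c₂ / γ) ∨ Real.sqrt (c₁ / γ) ≤ a₀) :
    ((∀ b, 0 < b → L (Real.sqrt (c₁ / γ)) ≤ L b) ∨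
        (∀ b, 0 < b → L (Real.sqrt (c₂ / γ)) ≤ L b)) ∧
      ¬ (∀ b, 0 < b → L a₀ ≤ L b) :=
  stmt_17_general c₁ c₂ k₁ k₂ γ hc2 hc hk hγ L hL a₀ ha₀ hfail
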